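/- Let P = {x ∈ ℝⁿ : Ax = b, Bx ≤ d} and c ∈ ℝⁿ. Let x₀ ∈ P, let y be a steepest-descent augmenting direction at x₀ (y is strictly feasible at x₀, By ≠ 0, and cᵀy/‖By‖₁ ≤ cᵀz/‖Bz‖₁ for every z strictly feasible at x₀ with Bz ≠ 0) with cᵀy < 0, let α > 0 be such that x₁ := x₀ + αy ∈ P and x₀ + α'y ∉ P for all α' > α, and let y' be a steepest-descent augmenting direction at x₁. If the steepness values agree, cᵀy/‖By‖₁ = cᵀy'/‖By'‖₁, then By and By' lie in a common closed orthant of ℝ^{m_B}, i.e., (By)_i·(By')_i ≥ 0 for every index i. Equivalently, a change in orthants from By to By' implies a strict change in steepness. -/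

import Mathlib

open Finset Matrix

/-- `y` is strictly feasible at `x₀` with respect to the set `P`. -/
def StrictlyFeasible {n : ℕ} (P : Set (Fin n → ℝ)) (x₀ y : Fin n → ℝ) : Prop :=
  ∃ α : ℝ, 0 < α ∧ x₀ + α • y ∈ P

/-- `y` is a steepest-descent augmenting direction at `x₀` with respect to `P`, `B`, `c`. -/
def IsSteepestDescentDirection {n mB : ℕ} (P : Set (Fin n → ℝ))
    (B : Matrix (Fin mB) (Fin n) ℝ) (c : Fin n → ℝ) (x₀ y : Fin n → ℝ) : Prop :=
  StrictlyFeasible P x₀ y ∧ B.mulVec y ≠ 0 ∧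
    ∀ z : Fin n → ℝ, StrictlyFeasible P x₀ z → B.mulVec z ≠ 0 →
      c ⬝ᵥ y / (∑ i, |B.mulVec y i|) ≤ c ⬝ᵥ z / (∑ i, |B.mulVec z i|)

/-! Let `s < 0` be the common steepness and `y'` be feasible at `x₁` with step `β`. Then
`w := α y + β y'` is feasible at `x₀` (with step `1`) and `cᵀw = s (α‖By‖₁ + β‖By'‖₁)`.
Since `y` is steepest at `x₀` and `s < 0`, this forces `‖Bw‖₁ ≥ ‖αBy‖₁ + ‖βBy'‖₁`, so the
triangle inequality for `Bw = αBy + βBy'` is an equality, which happens only coordinatewise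
within one orthant. (`Bw ≠ 0`: otherwise `w + y` would be steeper than `y`.) -/

lemma convex_polyhedron {m n k : ℕ} (A : Matrix (Fin m) (Fin n) ℝ)
    (B : Matrix (Fin k) (Fin n) ℝ) (b : Fin m → ℝ) (d : Fin k → ℝ) :
    Convex ℝ {x | A *ᵥ x = b ∧ ∀ i, (B *ᵥ x) i ≤ d i} := by
  rintro x ⟨hAx, hBx⟩ z ⟨hAz, hBz⟩ s t hs ht hst
  refine ⟨?_, fun i => ?_⟩
  · rw [mulVec_add, mulVec_smul, mulVec_smul, hAx, hAz, ← add_smul, hst, one_smul]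
  · simp only [mulVec_add, mulVec_smul, Pi.add_apply, Pi.smul_apply, smul_eq_mul]
    calc s * (B *ᵥ x) i + t * (B *ᵥ z) i ≤ s * d i + t * d i :=
          add_le_add (mul_le_mul_of_nonneg_left (hBx i) hs) (mul_le_mul_of_nonneg_left (hBz i) ht)
      _ = d i := by rw [← add_mul, hst, one_mul]

lemma StrictlyFeasible.add {n : ℕ} {P : Set (Fin n → ℝ)} (hP : Convex ℝ P) {x₀ u v : Fin n → ℝ}
    (hu : StrictlyFeasible P x₀ u) (hv : StrictlyFeasible P x₀ v) :
    StrictlyFeasible P x₀ (u + v) := by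
  obtain ⟨α, hα, hαP⟩ := hu
  obtain ⟨β, hβ, hβP⟩ := hv
  have hαβ : 0 < α + β := add_pos hα hβ
  refine ⟨α * β / (α + β), by positivity, ?_⟩
  convert hP hβP hαP (div_pos hα hαβ).le (div_pos hβ hαβ).le
    (by rw [← add_div, div_self hαβ.ne']) using 1
  match_scalars <;> field_simp

lemma sum_abs_pos {ι : Type*} [Fintype ι] {v : ι → ℝ} (hv : v ≠ 0) : 0 < ∑ i, |v i| := by
  obtain ⟨i, hi⟩ := Function.ne_iff.mp hv
  exact Finset.sum_pos' (fun j _ => abs_nonneg (v j)) ⟨i, mem_univ i, abs_pos.mpr hi⟩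

lemma mul_nonneg_of_sum_abs_le_sum_abs_add {ι : Type*} [Fintype ι] {u v : ι → ℝ}
    (h : ∑ i, |u i| + ∑ i, |v i| ≤ ∑ i, |u i + v i|) (i : ι) : 0 ≤ u i * v i := by
  have htri : ∀ j ∈ univ, |u j + v j| ≤ |u j| + |v j| := fun j _ => abs_add_le _ _
  have hsum : ∑ j, |u j + v j| = ∑ j, (|u j| + |v j|) :=
    le_antisymm (sum_le_sum htri) (by rwa [sum_add_distrib])
  have hi := (sum_eq_sum_iff_of_le htri).mp hsum i (mem_univ i)
  exact mul_nonneg_iff.mpr ((abs_add_eq_add_abs_iff _ _).mp hi)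

namespace IsSteepestDescentDirection

variable {n m : ℕ} {P : Set (Fin n → ℝ)} {B : Matrix (Fin m) (Fin n) ℝ} {c x₀ y w : Fin n → ℝ}

lemma dotProduct_nonneg_of_mulVec_eq_zero (hP : Convex ℝ P)
    (hy : IsSteepestDescentDirection P B c x₀ y) (hw : StrictlyFeasible P x₀ w)
    (hBw : B *ᵥ w = 0) : 0 ≤ c ⬝ᵥ w := by
  obtain ⟨hyP, hBy, hmin⟩ := hy
  have hB : B *ᵥ (w + y) = B *ᵥ y := by rw [mulVec_add, hBw, zero_add]
  have hle := hmin (w + y) (hw.add hP hyP) (hB ▸ hBy)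
  rw [hB, dotProduct_add] at hle
  linarith [(div_le_div_iff_of_pos_right (sum_abs_pos hBy)).mp hle]

lemma le_sum_abs_mulVec (hy : IsSteepestDescentDirection P B c x₀ y) (hcy : c ⬝ᵥ y < 0)
    (hw : StrictlyFeasible P x₀ w) (hBw : B *ᵥ w ≠ 0) {M : ℝ}
    (hcw : c ⬝ᵥ w = c ⬝ᵥ y / (∑ i, |(B *ᵥ y) i|) * M) : M ≤ ∑ i, |(B *ᵥ w) i| := by
  have hs : c ⬝ᵥ y / (∑ i, |(B *ᵥ y) i|) < 0 := div_neg_of_neg_of_pos hcy (sum_abs_pos hy.2.1)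
  have hle := hy.2.2 w hw hBw
  rw [hcw, le_div_iff₀ (sum_abs_pos hBw)] at hle
  exact (mul_le_mul_left_of_neg hs).mp hle

end IsSteepestDescentDirection

theorem equal_steepness_same_orthant_general
    (n mA mB : ℕ) (A : Matrix (Fin mA) (Fin n) ℝ) (B : Matrix (Fin mB) (Fin n) ℝ)
    (b : Fin mA → ℝ) (d : Fin mB → ℝ) (c : Fin n → ℝ)
    (P : Set (Fin n → ℝ))
    (hP : P = {x | A.mulVec x = b ∧ ∀ i, B.mulVec x i ≤ d i})
    (x₀ : Fin n → ℝ)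
    (y : Fin n → ℝ) (hy : IsSteepestDescentDirection P B c x₀ y)
    (hcy : c ⬝ᵥ y < 0)
    (α : ℝ) (hα : 0 < α)
    (x₁ : Fin n → ℝ) (hx₁ : x₁ = x₀ + α • y)
    (y' : Fin n → ℝ) (hy' : IsSteepestDescentDirection P B c x₁ y')
    (heq : c ⬝ᵥ y / (∑ i, |B.mulVec y i|) = c ⬝ᵥ y' / (∑ i, |B.mulVec y' i|)) :
    ∀ i, B.mulVec y i * B.mulVec y' i ≥ 0 := by
  have hconv : Convex ℝ P := hP ▸ convex_polyhedron A B b d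
  obtain ⟨β, hβ, hβP⟩ := hy'.1
  set w := α • y + β • y'
  have hw : StrictlyFeasible P x₀ w := ⟨1, one_pos, by rwa [one_smul, ← add_assoc, ← hx₁]⟩
  have hS := sum_abs_pos hy.2.1
  have hS' := sum_abs_pos hy'.2.1
  have hcw : c ⬝ᵥ w = c ⬝ᵥ y / (∑ i, |(B *ᵥ y) i|) *
      (α * ∑ i, |(B *ᵥ y) i| + β * ∑ i, |(B *ᵥ y') i|) := by
    have hcy' : c ⬝ᵥ y' = c ⬝ᵥ y / (∑ i, |(B *ᵥ y) i|) * ∑ i, |(B *ᵥ y') i| := by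
      rw [heq, div_mul_cancel₀ _ hS'.ne']
    rw [dotProduct_add, dotProduct_smul, dotProduct_smul, hcy', smul_eq_mul, smul_eq_mul]
    field_simp
  have hBw : B *ᵥ w ≠ 0 := fun h0 => by
    have hcw_nonneg := hy.dotProduct_nonneg_of_mulVec_eq_zero hconv hw h0
    nlinarith [mul_pos hα hS, mul_pos hβ hS', div_neg_of_neg_of_pos hcy hS]
  have hle := hy.le_sum_abs_mulVec hcy hw hBw hcw
  have hsplit : ∑ i, |(α • B *ᵥ y) i| + ∑ i, |(β • B *ᵥ y') i| =
      α * ∑ i, |(B *ᵥ y) i| + β * ∑ i, |(B *ᵥ y') i| := by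
    simp only [Pi.smul_apply, smul_eq_mul, abs_mul, abs_of_pos hα, abs_of_pos hβ, mul_sum]
  rw [← hsplit, mulVec_add, mulVec_smul, mulVec_smul] at hle
  intro i
  have hscaled := mul_nonneg_of_sum_abs_le_sum_abs_add hle i
  simp only [Pi.smul_apply, smul_eq_mul] at hscaled
  nlinarith [mul_pos hα hβ]

/-- If consecutive steepest-descent directions have equal steepness, then
`B y` and `B y'` lie in a common closed orthant; equivalently, a change in orthants implies
a strict change in steepness. -/
theorem equal_steepness_same_orthant
    (n mA mB : ℕ) (A : Matrix (Fin mA) (Fin n) ℝ) (B : Matrix (Fin mB) (Fin n) ℝ)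
    (b : Fin mA → ℝ) (d : Fin mB → ℝ) (c : Fin n → ℝ)
    (P : Set (Fin n → ℝ))
    (hP : P = {x | A.mulVec x = b ∧ ∀ i, B.mulVec x i ≤ d i})
    (x₀ : Fin n → ℝ) (hx₀ : x₀ ∈ P)
    (y : Fin n → ℝ) (hy : IsSteepestDescentDirection P B c x₀ y)
    (hcy : c ⬝ᵥ y < 0)
    (α : ℝ) (hα : 0 < α)
    (x₁ : Fin n → ℝ) (hx₁ : x₁ = x₀ + α • y)
    (hx₁P : x₁ ∈ P)
    (hmax : ∀ α' : ℝ, α < α' → x₀ + α' • y ∉ P)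
    (y' : Fin n → ℝ) (hy' : IsSteepestDescentDirection P B c x₁ y')
    (heq : c ⬝ᵥ y / (∑ i, |B.mulVec y i|) = c ⬝ᵥ y' / (∑ i, |B.mulVec y' i|)) :
    ∀ i, B.mulVec y i * B.mulVec y' i ≥ 0 :=
  equal_steepness_same_orthant_general n mA mB A B b d c P hP x₀ y hy hcy α hα x₁ hx₁ y' hy' heq
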